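/- Let (Ω, 𝓕, P) be a complete probability space, let H be a separable real Hilbert space, and let (A_ω)_{ω∈Ω} be a family of maximally monotone operators from H to 2^H such that for every 𝗑 ∈ H the map ω ↦ J_{A_ω} 𝗑 is measurable and ∫_Ω ‖J_{A_ω} 0‖² P(dω) < +∞. Then the resolvent expectation coincides with the integral resolvent mixture and comixture taken with L_ω = Id_H for all ω: PE(A_ω)_{ω∈Ω} = rmi(Id_H, A_ω)_{ω∈Ω} = rcm(Id_H, A_ω)_{ω∈Ω}. -/

import Mathlib

open MeasureTheory
open scoped ENNReal NNReal

/-- A set-valued operator `A : H → Set H` (identified with its graph) is monotone if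
`⟪x − y, u − v⟫ ≥ 0` whenever `u ∈ A x` and `v ∈ A y`. -/
def IsMonotoneOp {H : Type*} [NormedAddCommGroup H] [InnerProductSpace ℝ H]
    (A : H → Set H) : Prop :=
  ∀ ⦃x u y v : H⦄, u ∈ A x → v ∈ A y → (0 : ℝ) ≤ inner ℝ (x - y) (u - v)

/-- `A` is maximally monotone: it is monotone and its graph is not properly contained in the
graph of any monotone operator. -/
def IsMaxMonotone {H : Type*} [NormedAddCommGroup H] [InnerProductSpace ℝ H]
    (A : H → Set H) : Prop :=
  IsMonotoneOp A ∧ ∀ B : H → Set H, IsMonotoneOp B → (∀ x, A x ⊆ B x) → ∀ x, B x ⊆ A x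

/-- The inverse operator `A⁻¹`, whose graph is `{(u, x) : (x, u) ∈ gra A}`. -/
def graphInv {H : Type*} (A : H → Set H) : H → Set H := fun u => {x | u ∈ A x}

/-- `J` is the resolvent `(Id + A)⁻¹` of `A` (as a single-valued, everywhere-defined map):
`J x = y ↔ x − y ∈ A y`. -/
def IsResolventOf {H : Type*} [AddCommGroup H] (A : H → Set H) (J : H → H) : Prop :=
  ∀ x y, J x = y ↔ x - y ∈ A y

/-- For a single-valued map `R : X → X`, `rmiOp R = R⁻¹ − Id` as a set-valued operator:
`u ∈ (R⁻¹ − Id)(x) ↔ R (x + u) = x`. -/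
def rmiOp {X : Type*} [AddCommGroup X] (R : X → X) : X → Set X :=
  fun x => {u | R (x + u) = x}

/-!
Integrating Moreau's decomposition `J_{A_ω⁻¹} = Id − J_{A_ω}` gives `∫ J_{A_ω⁻¹} = Id − ∫ J_{A_ω}`;
the integrals exist because each resolvent is nonexpansive and `ω ↦ J_{A_ω} 0` is square
integrable, hence integrable, on a probability space. For any single-valued `R` one has
`(R⁻¹ − Id)⁻¹ = (Id − R)⁻¹ − Id`, which with `R = ∫ J_{A_ω}` identifies the comixture with the
mixture. The resolvent expectation and the mixture with `L_ω = Id` are the same operator.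
-/

theorem rmiOp_eq_graphInv_rmiOp_sub {X : Type*} [AddCommGroup X] (R : X → X) :
    rmiOp R = graphInv (rmiOp fun y => y - R y) := by
  ext x u
  simp only [rmiOp, graphInv, Set.mem_ofPred_eq, add_comm u x, sub_eq_iff_eq_add,
    add_right_inj]
  exact eq_comm

namespace IsResolventOf

variable {H : Type*} {A : H → Set H} {J : H → H}

theorem sub_mem [AddCommGroup H] (hJ : IsResolventOf A J)
    (x : H) : x - J x ∈ A (J x) :=
  (hJ x _).mp rfl

theorem graphInv_apply_eq [AddCommGroup H] {K : H → H}
    (hJ : IsResolventOf A J) (hK : IsResolventOf (graphInv A) K) (x : H) : K x = x - J x :=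
  (hK x _).mpr (by simpa [graphInv] using hJ.sub_mem x)

variable [NormedAddCommGroup H] [InnerProductSpace ℝ H]

theorem norm_sub_sq_le_inner (hJ : IsResolventOf A J) (hA : IsMonotoneOp A) (x y : H) :
    ‖J x - J y‖ ^ 2 ≤ inner ℝ (J x - J y) (x - y) := by
  have hmono := hA (hJ.sub_mem x) (hJ.sub_mem y)
  rw [show x - J x - (y - J y) = (x - y) - (J x - J y) by abel, inner_sub_right,
    real_inner_self_eq_norm_sq] at hmono
  linarith

theorem lipschitzWith_one (hJ : IsResolventOf A J) (hA : IsMonotoneOp A) : LipschitzWith 1 J := by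
  refine LipschitzWith.of_dist_le_mul fun x y => ?_
  rw [NNReal.coe_one, one_mul, dist_eq_norm, dist_eq_norm]
  have hsq : ‖J x - J y‖ ^ 2 ≤ ‖J x - J y‖ * ‖x - y‖ :=
    (hJ.norm_sub_sq_le_inner hA x y).trans (real_inner_le_norm _ _)
  nlinarith [norm_nonneg (J x - J y), norm_nonneg (x - y)]

end IsResolventOf

theorem integrable_of_lintegral_nnnorm_sq_lt_top {Ω E : Type*} [MeasurableSpace Ω]
    {P : Measure Ω} [IsFiniteMeasure P] [NormedAddCommGroup E] {f : Ω → E}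
    (hf : AEStronglyMeasurable f P) (hf2 : ∫⁻ ω, (‖f ω‖₊ : ℝ≥0∞) ^ 2 ∂P < ⊤) :
    Integrable f P := by
  refine MemLp.integrable (q := 2) one_le_two ⟨hf, ?_⟩
  rw [eLpNorm_lt_top_iff_lintegral_rpow_enorm_lt_top two_ne_zero ENNReal.ofNat_ne_top]
  simpa [enorm_eq_nnnorm] using hf2

theorem integrable_apply_of_lipschitzWith {Ω E F : Type*} [MeasurableSpace Ω] {P : Measure Ω}
    [IsFiniteMeasure P] [PseudoMetricSpace E] [NormedAddCommGroup F] {f : Ω → E → F} {K : ℝ≥0}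
    (hf : ∀ ω, LipschitzWith K (f ω)) (hmeas : ∀ y, AEStronglyMeasurable (f · y) P) {x : E}
    (hx : Integrable (f · x) P) (y : E) : Integrable (f · y) P := by
  refine (hx.norm.add (integrable_const (K * dist y x))).mono' (hmeas y) (ae_of_all _ fun ω => ?_)
  calc ‖f ω y‖ ≤ ‖f ω x‖ + ‖f ω y - f ω x‖ := norm_le_norm_add_norm_sub' _ _
    _ ≤ ‖f ω x‖ + K * dist y x := by rw [← dist_eq_norm]; gcongr; exact (hf ω).dist_le_mul y x

theorem stmt_10_general
    {Ω : Type*} [MeasurableSpace Ω] {P : Measure Ω} [IsProbabilityMeasure P]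
    {H : Type*} [NormedAddCommGroup H] [InnerProductSpace ℝ H] [CompleteSpace H]
    [SecondCountableTopology H] [MeasurableSpace H] [BorelSpace H]
    (A : Ω → H → Set H) (JA JAinv : Ω → H → H)
    (hAmax : ∀ ω, IsMaxMonotone (A ω))
    (hJA : ∀ ω, IsResolventOf (A ω) (JA ω))
    (hJAinv : ∀ ω, IsResolventOf (graphInv (A ω)) (JAinv ω))
    (hJAmeas : ∀ x : H, Measurable fun ω => JA ω x)
    (hJA0 : (∫⁻ ω, (‖JA ω 0‖₊ : ℝ≥0∞) ^ 2 ∂P) < ⊤) :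
    (rmiOp fun x : H => ∫ ω, JA ω x ∂P) = (rmiOp fun x : H => ∫ ω, JA ω x ∂P) ∧
    (rmiOp fun x : H => ∫ ω, JA ω x ∂P)
      = graphInv (rmiOp fun x : H => ∫ ω, JAinv ω x ∂P) := by
  have hint : ∀ x, Integrable (fun ω => JA ω x) P :=
    integrable_apply_of_lipschitzWith (fun ω => (hJA ω).lipschitzWith_one (hAmax ω).1)
      (fun x => (hJAmeas x).aestronglyMeasurable)
      (integrable_of_lintegral_nnnorm_sq_lt_top (hJAmeas 0).aestronglyMeasurable hJA0)
  have hmoreau : (fun x => ∫ ω, JAinv ω x ∂P) = fun x => x - ∫ ω, JA ω x ∂P := by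
    funext x
    simp only [(hJA _).graphInv_apply_eq (hJAinv _)]
    rw [integral_sub (integrable_const x) (hint x), integral_const, probReal_univ, one_smul]
  exact ⟨rfl, hmoreau ▸ rmiOp_eq_graphInv_rmiOp_sub _⟩

/-- Proposition 3.9: on a complete probability space, the resolvent
expectation `PE(A_ω) = (x ↦ ∫ J_{A_ω} x dP)⁻¹ − Id` coincides with the integral resolvent
mixture `rmi(Id, A_ω)` and the comixture `rcm(Id, A_ω)`. -/
theorem stmt_10
    {Ω : Type*} [MeasurableSpace Ω] {P : Measure Ω} [IsProbabilityMeasure P] [P.IsComplete]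
    {H : Type*} [NormedAddCommGroup H] [InnerProductSpace ℝ H] [CompleteSpace H]
    [SecondCountableTopology H] [MeasurableSpace H] [BorelSpace H]
    (A : Ω → H → Set H) (JA JAinv : Ω → H → H)
    (hAmax : ∀ ω, IsMaxMonotone (A ω))
    (hJA : ∀ ω, IsResolventOf (A ω) (JA ω))
    (hJAinv : ∀ ω, IsResolventOf (graphInv (A ω)) (JAinv ω))
    (hJAmeas : ∀ x : H, Measurable fun ω => JA ω x)
    (hJA0 : (∫⁻ ω, (‖JA ω 0‖₊ : ℝ≥0∞) ^ 2 ∂P) < ⊤) :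
    (rmiOp fun x : H => ∫ ω, JA ω x ∂P) = (rmiOp fun x : H => ∫ ω, JA ω x ∂P) ∧
    (rmiOp fun x : H => ∫ ω, JA ω x ∂P)
      = graphInv (rmiOp fun x : H => ∫ ω, JAinv ω x ∂P) :=
  stmt_10_general A JA JAinv hAmax hJA hJAinv hJAmeas hJA0
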